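/- For every positive integer k, k < 2^{2 + o(⌈k/6⌉ + 1)}. -/
import Mathlib

noncomputable def ell (g : ℕ) : ℕ :=
  sInf {k | ∃ a n : Fin k → ℕ, (∀ i, a i = 1 ∨ a i = 3) ∧ g = ∑ i, a i * 2 ^ n i}

noncomputable def obj (g : ℕ) : ℕ := g - ell g

lemma rep_exists (g : ℕ) : ∃ a n : Fin g → ℕ,
    (∀ i, a i = 1 ∨ a i = 3) ∧ g = ∑ i, a i * 2 ^ n i :=
  ⟨fun _ => 1, fun _ => 0, fun _ => Or.inl rfl, by simp⟩

lemma ell_le {g k : ℕ}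
    (h : ∃ a n : Fin k → ℕ, (∀ i, a i = 1 ∨ a i = 3) ∧ g = ∑ i, a i * 2 ^ n i) :
    ell g ≤ k :=
  Nat.sInf_le h

lemma ell_spec (g : ℕ) : ∃ a n : Fin (ell g) → ℕ,
    (∀ i, a i = 1 ∨ a i = 3) ∧ g = ∑ i, a i * 2 ^ n i := by
  have h : ell g ∈ {k : ℕ | ∃ a n : Fin k → ℕ,
      (∀ i, a i = 1 ∨ a i = 3) ∧ g = ∑ i, a i * 2 ^ n i} :=
    Nat.sInf_mem ⟨g, rep_exists g⟩
  exact h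

lemma ell_one : ell 1 ≤ 1 :=
  ell_le ⟨fun _ => 1, fun _ => 0, fun _ => Or.inl rfl, by simp⟩

lemma ell_three : ell 3 ≤ 1 :=
  ell_le ⟨fun _ => 3, fun _ => 0, fun _ => Or.inr rfl, by simp⟩

lemma ell_add (x y : ℕ) : ell (x + y) ≤ ell x + ell y := by
  obtain ⟨a1, n1, h1, e1⟩ := ell_spec x
  obtain ⟨a2, n2, h2, e2⟩ := ell_spec y
  apply ell_le
  refine ⟨Fin.append a1 a2, Fin.append n1 n2, ?_, ?_⟩
  · intro i
    refine Fin.addCases (fun j => ?_) (fun j => ?_) i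
    · simpa [Fin.append_left] using h1 j
    · simpa [Fin.append_right] using h2 j
  · rw [Fin.sum_univ_add]
    simp only [Fin.append_left, Fin.append_right]
    rw [← e1, ← e2]

lemma ell_double (g : ℕ) : ell (2 * g) ≤ ell g := by
  obtain ⟨a, n, h, e⟩ := ell_spec g
  apply ell_le
  refine ⟨a, fun i => n i + 1, h, ?_⟩
  have : ∑ i : Fin (ell g), a i * 2 ^ (n i + 1)
      = 2 * ∑ i : Fin (ell g), a i * 2 ^ n i := by
    rw [Finset.mul_sum]
    refine Finset.sum_congr rfl fun i _ => by rw [pow_succ]; ring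
  rw [this, ← e]

lemma ell_two : ell 2 ≤ 1 := by
  have h := ell_double 1; norm_num at h; exact le_trans h ell_one

lemma ell_four : ell 4 ≤ 1 := by
  have h := ell_double 2; norm_num at h; exact le_trans h ell_two

lemma ell_five : ell 5 ≤ 2 := by
  have h := ell_add 4 1; norm_num at h
  have := ell_four; have := ell_one; omega

lemma ell_six : ell 6 ≤ 1 := by
  have h := ell_double 3; norm_num at h; exact le_trans h ell_three

lemma ell_le_log : ∀ g : ℕ, 1 ≤ g → ell g ≤ Nat.log 2 g + 1 := by
  intro g
  induction g using Nat.strong_induction_on with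
  | _ g ih =>
    intro hg
    rcases Nat.even_or_odd g with ⟨m, hm⟩ | ⟨m, hm⟩
    · subst hm
      have hm1 : 1 ≤ m := by omega
      have h1 : ell (m + m) ≤ ell m := by
        have := ell_double m; rwa [two_mul] at this
      have h2 := ih m (by omega) hm1
      have h3 : Nat.log 2 m ≤ Nat.log 2 (m + m) := Nat.log_mono_right (by omega)
      omega
    · subst hm
      rcases Nat.eq_zero_or_pos m with hm0 | hm1
      · subst hm0; simpa using ell_one
      · have h1 : ell (2 * m + 1) ≤ ell (2 * m) + ell 1 := ell_add (2 * m) 1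
        have h2 : ell (2 * m) ≤ ell m := ell_double m
        have h4 := ih m (by omega) hm1
        have h5 : Nat.log 2 m + 1 ≤ Nat.log 2 (2 * m + 1) := by
          calc Nat.log 2 m + 1 = Nat.log 2 (2 * m) := by
                rw [mul_comm, Nat.log_mul_base (by norm_num) (by omega)]
            _ ≤ Nat.log 2 (2 * m + 1) := Nat.log_mono_right (by omega)
        have := ell_one
        omega

lemma pow_gt_aux : ∀ m : ℕ, 6 * (m + 6) * (m + 7) < 2 ^ (m + 8) := by
  intro m
  induction m with
  | zero => norm_num
  | succ m ih =>
    have h2 : 2 ^ (m + 1 + 8) = 2 * 2 ^ (m + 8) := by ring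
    rw [h2]
    nlinarith [ih]

lemma pow_gt (g : ℕ) (hg : 7 ≤ g) : 6 * (g - 1) * g < 2 ^ (g + 1) := by
  obtain ⟨m, rfl⟩ : ∃ m, g = m + 7 := ⟨g - 7, by omega⟩
  have h1 : m + 7 - 1 = m + 6 := by omega
  have h2 : m + 7 + 1 = m + 8 := by omega
  rw [h1, h2]
  exact pow_gt_aux m

lemma main_aux (k g b : ℕ) (h1 : ell g ≤ b) (hb : b ≤ g) (h2 : k < 2 ^ (2 + g - b)) :
    k < 2 ^ (2 + (g - ell g)) :=
  lt_of_lt_of_le h2 (Nat.pow_le_pow_right (by norm_num) (by omega))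

theorem stmt10 (k : ℕ) (hk : 0 < k) : k < 2 ^ (2 + obj ((k + 5) / 6 + 1)) := by
  set g : ℕ := (k + 5) / 6 + 1 with hgdef
  have hg2 : 2 ≤ g := by omega
  have hk6 : k ≤ 6 * (g - 1) := by omega
  show k < 2 ^ (2 + (g - ell g))
  rcases le_or_gt g 6 with hle | hgt
  · interval_cases g
    · exact main_aux k 2 1 ell_two (by norm_num) (by omega)
    · exact main_aux k 3 1 ell_three (by norm_num) (by omega)
    · exact main_aux k 4 1 ell_four (by norm_num) (by omega)
    · exact main_aux k 5 2 ell_five (by norm_num) (by omega)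
    · exact main_aux k 6 1 ell_six (by norm_num) (by omega)
  · have hlog := ell_le_log g (by omega)
    have hlg : Nat.log 2 g < g := Nat.log_lt_self 2 (by omega)
    apply main_aux k g (Nat.log 2 g + 1) hlog (by omega)
    have hpl : 2 ^ Nat.log 2 g ≤ g := Nat.pow_log_le_self 2 (by omega)
    have hP := pow_gt g (by omega)
    have key : 2 ^ (2 + g - (Nat.log 2 g + 1)) * 2 ^ Nat.log 2 g = 2 ^ (g + 1) := by
      rw [← pow_add]; congr 1; omega
    have hkg : k * g < 2 ^ (2 + g - (Nat.log 2 g + 1)) * g := by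
      calc k * g ≤ 6 * (g - 1) * g := Nat.mul_le_mul_right g hk6
        _ < 2 ^ (g + 1) := hP
        _ = 2 ^ (2 + g - (Nat.log 2 g + 1)) * 2 ^ Nat.log 2 g := key.symm
        _ ≤ 2 ^ (2 + g - (Nat.log 2 g + 1)) * g := Nat.mul_le_mul_left _ hpl
    exact Nat.lt_of_mul_lt_mul_right hkg
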